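/- arXiv:1412.6353 — 2 statements merged into one kernel-verified Lean document; each statement's English description precedes it below -/
import Mathlib

section
/- If a is a right n-Engel element of a group G (i.e., [a,ₙ g] = 1 for all g ∈ G), then a⁻¹ is a left (n+1)-Engel element of G (i.e., [g,ₙ₊₁ a⁻¹] = 1 for all g ∈ G). -/
/- Write `a^g = g⁻¹ a g`. Then `[g, a⁻¹] = a^g a⁻¹`, and one more commutation with `a⁻¹` gives
`[g, a⁻¹, a⁻¹] = a [a^g, a⁻¹] a⁻¹`. Since conjugation by `a` fixes `a⁻¹`, iterating yields
`[g, ₙ₊₁ a⁻¹] = a [a^g, ₙ a⁻¹] a⁻¹` for `n ≥ 1`, and `[a^g, ₙ a⁻¹]` is the conjugate by `g⁻¹` of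
`[a, ₙ g a⁻¹ g⁻¹] = 1`. -/

/-- Iterated Engel commutator: `engel x y n = [x, y, y, ..., y]` (n copies of y),
with the convention `[x, y] = x⁻¹ * y⁻¹ * x * y`. -/
def engel {G : Type*} [Group G] (x y : G) : ℕ → G
  | 0 => x
  | n + 1 => (engel x y n)⁻¹ * y⁻¹ * engel x y n * y

section Engel

variable {G : Type*} [Group G]

theorem engel_add (x y : G) (k m : ℕ) : engel x y (k + m) = engel (engel x y k) y m := by
  induction m with
  | zero => rfl
  | succ m ih => rw [← add_assoc, engel, engel, ih]

theorem map_engel {H : Type*} [Group H] (f : G →* H) (x y : G) (k : ℕ) :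
    f (engel x y k) = engel (f x) (f y) k := by
  induction k with
  | zero => rfl
  | succ k ih => simp only [engel, map_mul, map_inv, ih]

theorem engel_conj (c x y : G) (k : ℕ) :
    engel (c * x * c⁻¹) (c * y * c⁻¹) k = c * engel x y k * c⁻¹ := by
  simpa only [MonoidHom.coe_coe, MulAut.conj_apply] using
    (map_engel (MulAut.conj c : G →* G) x y k).symm

theorem engel_conj_eq_one {a : G} {n : ℕ} (h : ∀ g : G, engel a g n = 1) (c y : G) :
    engel (c⁻¹ * a * c) y n = 1 := by
  simpa [h, mul_assoc] using engel_conj c⁻¹ a (c * y * c⁻¹) n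

theorem engel_inv_add_two (g a : G) (k : ℕ) :
    engel g a⁻¹ (k + 2) = a * engel (g⁻¹ * a * g) a⁻¹ (k + 1) * a⁻¹ := by
  have two : engel g a⁻¹ 2 = a * engel (g⁻¹ * a * g) a⁻¹ 1 * a⁻¹ := by
    simp only [engel]
    group
  calc engel g a⁻¹ (k + 2) = engel (a * engel (g⁻¹ * a * g) a⁻¹ 1 * a⁻¹) a⁻¹ k := by
        rw [add_comm, engel_add, two]
    _ = a * engel (engel (g⁻¹ * a * g) a⁻¹ 1) a⁻¹ k * a⁻¹ := by
        simpa only [mul_inv_cancel, one_mul] using engel_conj a _ a⁻¹ k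
    _ = a * engel (g⁻¹ * a * g) a⁻¹ (k + 1) * a⁻¹ := by rw [← engel_add, add_comm]

end Engel

theorem right_nEngel_inv_left_succ_nEngel_general {G : Type*} [Group G] (a : G) (n : ℕ)
    (h : ∀ g : G, engel a g n = 1) :
    ∀ g : G, engel g a⁻¹ (n + 1) = 1 := by
  intro g
  cases n with
  | zero =>
    obtain rfl : a = 1 := h 1
    simp [engel]
  | succ k =>
    rw [engel_inv_add_two, engel_conj_eq_one h, mul_one, mul_inv_cancel]

/-- If `a` is a right `n`-Engel element of `G`, then `a⁻¹` is a left `(n+1)`-Engel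
element of `G`. -/
theorem right_nEngel_inv_left_succ_nEngel {G : Type*} [Group G] (a : G) (n : ℕ) (hn : 1 ≤ n)
    (h : ∀ g : G, engel a g n = 1) :
    ∀ g : G, engel g a⁻¹ (n + 1) = 1 :=
  right_nEngel_inv_left_succ_nEngel_general a n h
end

section
/- Let G be a group and let ρ̄(G) be the set of elements a ∈ G such that there exists k = k(a) with ⟨x⟩ subnormal of defect at most k in ⟨x, a^G⟩ for every x ∈ G. Then every element of ρ̄(G) is a bounded right Engel element of G. -/
/-- `A` is normal in `B` as subgroups of `G` (a step in a subnormal chain). -/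
def StepNormal {G : Type*} [Group G] (A B : Subgroup G) : Prop :=
  A ≤ B ∧ ∀ b ∈ B, ∀ x ∈ A, b * x * b⁻¹ ∈ A

/-- `A` is subnormal of defect at most `k` in `B`. -/
def SubnormalOfDefect {G : Type*} [Group G] (A B : Subgroup G) (k : ℕ) : Prop :=
  ∃ c : Fin (k + 1) → Subgroup G, c 0 = A ∧ c (Fin.last k) = B ∧
    ∀ i : Fin k, StepNormal (c i.castSucc) (c i.succ)

section

variable {G : Type*} [Group G]

theorem engel_succ' (x y : G) (n : ℕ) : engel x y (n + 1) = engel (engel x y 1) y n := by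
  induction n with
  | zero => rfl
  | succ n ih => rw [engel, ih, ← engel]

theorem engel_succ_eq_one_of_mem_zpowers {x g : G} {n : ℕ}
    (h : engel x g n ∈ Subgroup.zpowers g) : engel x g (n + 1) = 1 := by
  obtain ⟨m, hm⟩ := h
  have hcomm : Commute g (engel x g n) := hm ▸ (Commute.refl g).zpow_right m
  rw [engel, mul_assoc, ← hcomm.eq]
  group

theorem StepNormal.commutator_mem {A B : Subgroup G} (h : StepNormal A B) {y g : G}
    (hy : y ∈ B) (hg : g ∈ A) : y⁻¹ * g⁻¹ * y * g ∈ A := by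
  have hconj := h.2 y⁻¹ (inv_mem hy) g⁻¹ (inv_mem hg)
  rw [inv_inv] at hconj
  exact mul_mem hconj hg

theorem SubnormalOfDefect.zero {A B : Subgroup G} (h : SubnormalOfDefect A B 0) : A = B := by
  obtain ⟨c, hc0, hclast, -⟩ := h
  exact hc0.symm.trans hclast

theorem SubnormalOfDefect.exists_of_succ {A B : Subgroup G} {k : ℕ}
    (h : SubnormalOfDefect A B (k + 1)) :
    ∃ C, SubnormalOfDefect A C k ∧ StepNormal C B := by
  obtain ⟨c, hc0, hclast, hstep⟩ := h
  refine ⟨c (Fin.last k).castSucc, ⟨c ∘ Fin.castSucc, hc0, rfl, fun i => ?_⟩, ?_⟩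
  · simpa only [Function.comp_apply, Fin.succ_castSucc] using hstep i.castSucc
  · simpa only [Fin.succ_last, hclast] using hstep (Fin.last k)

theorem SubnormalOfDefect.le {A B : Subgroup G} {k : ℕ} (h : SubnormalOfDefect A B k) :
    A ≤ B := by
  induction k generalizing B with
  | zero => exact h.zero.le
  | succ k ih =>
    obtain ⟨C, hAC, hCB⟩ := h.exists_of_succ
    exact (ih hAC).trans hCB.1

theorem SubnormalOfDefect.engel_mem {A B : Subgroup G} {k : ℕ} (h : SubnormalOfDefect A B k)
    {g y : G} (hg : g ∈ A) (hy : y ∈ B) : engel y g k ∈ A := by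
  induction k generalizing B y with
  | zero => exact h.zero ▸ hy
  | succ k ih =>
    obtain ⟨C, hAC, hCB⟩ := h.exists_of_succ
    rw [engel_succ']
    exact ih hAC (hCB.commutator_mem hy (hAC.le hg))

end

/-- If there is `k` such that `⟨x⟩` is subnormal of defect at most `k` in `⟨x, a^G⟩`
for every `x ∈ G`, then `a` is a bounded right Engel element of `G`. -/
theorem rho_bar_subset_bounded_right_engel {G : Type*} [Group G] (a : G)
    (h : ∃ k : ℕ, ∀ x : G, SubnormalOfDefect (Subgroup.zpowers x)
      (Subgroup.zpowers x ⊔ Subgroup.normalClosure ({a} : Set G)) k) :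
    ∃ n ≥ 1, ∀ g : G, engel a g n = 1 := by
  obtain ⟨k, hk⟩ := h
  refine ⟨k + 1, Nat.le_add_left 1 k, fun g => engel_succ_eq_one_of_mem_zpowers ?_⟩
  have ha : a ∈ Subgroup.zpowers g ⊔ Subgroup.normalClosure ({a} : Set G) :=
    Subgroup.mem_sup_right (Subgroup.subset_normalClosure rfl)
  exact (hk g).engel_mem (Subgroup.mem_zpowers g) ha
end
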